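/- Let D_1,…,D_k be indecomposable group codes over G that are pairwise non-isomorphic as group codes, and let α_1,…,α_k ≥ 1. Then Aut_GC(D_1^{α_1} ⊕ ⋯ ⊕ D_k^{α_k}) is isomorphic as a group to the direct product Aut_GC(D_1^{α_1}) × ⋯ × Aut_GC(D_k^{α_k}). -/

import Mathlib

section GroupCodes
variable {G : Type*} [Group G] [DecidableEq G]

/-- The canonical splitting homomorphism `G^{n+m} → G^n × G^m`. -/
def splitHom (G : Type*) [Group G] (n m : ℕ) :
    (Fin (n + m) → G) →* (Fin n → G) × (Fin m → G) where
  toFun z := (fun i => z (Fin.castAdd m i), fun j => z (Fin.natAdd n j))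
  map_one' := rfl
  map_mul' _ _ := rfl

/-- Direct sum of two group codes, as a subgroup of `G^{n+m}`. -/
def gcSum {n m : ℕ} (C : Subgroup (Fin n → G)) (D : Subgroup (Fin m → G)) :
    Subgroup (Fin (n + m) → G) :=
  (C.prod D).comap (splitHom G n m)

/-- `φ` is a morphism of group codes from `C` to `D`. -/
def IsGroupCodeHom {n m : ℕ} (C : Subgroup (Fin n → G)) (D : Subgroup (Fin m → G))
    (φ : (Fin n → G) → (Fin m → G)) : Prop :=
  (∀ x y : Fin n → G, φ (x * y) = φ x * φ y) ∧ (∀ x ∈ C, φ x ∈ D) ∧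
    ∀ x y : Fin n → G, hammingDist (φ x) (φ y) ≤ hammingDist x y

/-- The group codes `C` and `D` are isomorphic as group codes. -/
def GroupCodeIso {n m : ℕ} (C : Subgroup (Fin n → G)) (D : Subgroup (Fin m → G)) : Prop :=
  ∃ (φ : (Fin n → G) → (Fin m → G)) (ψ : (Fin m → G) → (Fin n → G)),
    IsGroupCodeHom C D φ ∧ IsGroupCodeHom D C ψ ∧
      Function.LeftInverse ψ φ ∧ Function.RightInverse ψ φ

/-- A group code is decomposable if it is isomorphic, as a group code, to a direct sum
of two group codes of positive lengths. -/
def GCDecomposable {n : ℕ} (C : Subgroup (Fin n → G)) : Prop :=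
  ∃ (p q : ℕ) (D : Subgroup (Fin p → G)) (E : Subgroup (Fin q → G)),
    0 < p ∧ 0 < q ∧ GroupCodeIso C (gcSum D E)

/-- Reindexing homomorphism along an equality of lengths. -/
def reindexHom (G : Type*) [Group G] {a b : ℕ} (h : a = b) :
    (Fin b → G) →* (Fin a → G) where
  toFun z := fun i => z (Fin.cast h i)
  map_one' := rfl
  map_mul' _ _ := rfl

/-- Direct sum of a finite family of group codes (of possibly different lengths). -/
def gcMultiSum : {k : ℕ} → {len : Fin k → ℕ} →
    (∀ i, Subgroup (Fin (len i) → G)) → Subgroup (Fin (∑ i, len i) → G)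
  | 0, _, _ => ⊤
  | k + 1, len, D =>
    (gcSum (D 0) (gcMultiSum (fun i => D i.succ))).comap
      (reindexHom G (a := len 0 + ∑ i : Fin k, len i.succ) (b := ∑ i, len i)
        (Fin.sum_univ_succ len).symm)

/-- Direct sum of `α` copies of the group code `D`. -/
def gcPow {m : ℕ} (D : Subgroup (Fin m → G)) (α : ℕ) :
    Subgroup (Fin (∑ _ : Fin α, m) → G) :=
  gcMultiSum (fun _ : Fin α => D)

/-- The group of group-code automorphisms of a group code `C ⊆ G^n`:  group automorphisms
of `G^n` that preserve the Hamming distance and map `C` onto `C`. -/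
def AutGC {n : ℕ} (C : Subgroup (Fin n → G)) : Subgroup (MulAut (Fin n → G)) where
  carrier := {φ | (∀ x y, hammingDist (φ x) (φ y) = hammingDist x y) ∧
    ∀ x, φ x ∈ C ↔ x ∈ C}
  one_mem' := ⟨fun _ _ => rfl, fun _ => Iff.rfl⟩
  mul_mem' := by
    rintro φ ψ ⟨hφ1, hφ2⟩ ⟨hψ1, hψ2⟩
    exact ⟨fun x y => (hφ1 (ψ x) (ψ y)).trans (hψ1 x y),
      fun x => (hφ2 (ψ x)).trans (hψ2 x)⟩
  inv_mem' := by
    rintro φ ⟨h1, h2⟩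
    refine ⟨fun x y => ?_, fun x => ?_⟩
    · have := h1 (φ⁻¹ x) (φ⁻¹ y)
      rw [MulAut.apply_inv_self, MulAut.apply_inv_self] at this
      exact this.symm
    · have := h2 (φ⁻¹ x)
      rw [MulAut.apply_inv_self] at this
      exact this.symm

/-- The action of `S_α` on `M^α` by permutation of coordinates, as a homomorphism
into the automorphism group. -/
def permActionHom (M : Type*) [Monoid M] (α : ℕ) :
    Equiv.Perm (Fin α) →* MulAut (Fin α → M) where
  toFun σ :=
    { toFun := fun f i => f (σ⁻¹ i)
      invFun := fun f i => f (σ i)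
      left_inv := fun f => by funext i; simp
      right_inv := fun f => by funext i; simp
      map_mul' := fun _ _ => rfl }
  map_one' := by ext f i; simp
  map_mul' σ τ := by ext f i; simp [mul_inv_rev]

/-- A cyclic group code: closed under the cyclic shift of coordinates. -/
def IsCyclicGC {n : ℕ} (C : Subgroup (Fin n → G)) : Prop :=
  ∀ x ∈ C, (x ∘ finRotate n) ∈ C

end GroupCodes

set_option linter.unusedVariables false
namespace GCaux
open Finset Function

variable {G : Type*} [Group G] [DecidableEq G]

/-- Embedding of the `i`-th summand into the total index type. -/
def msEmb : {k : ℕ} → (len : Fin k → ℕ) → (i : Fin k) → Fin (len i) → Fin (∑ i, len i)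
  | 0, _, i => i.elim0
  | k+1, len, i => Fin.cases (motive := fun i => Fin (len i) → Fin (∑ i, len i))
      (fun a => Fin.cast (Fin.sum_univ_succ len).symm (Fin.castAdd _ a))
      (fun i a => Fin.cast (Fin.sum_univ_succ len).symm
        (Fin.natAdd (len 0) (msEmb (fun i => len i.succ) i a))) i

lemma msEmb_zero {k : ℕ} (len : Fin (k+1) → ℕ) (a : Fin (len 0)) :
    msEmb len 0 a = Fin.cast (Fin.sum_univ_succ len).symm (Fin.castAdd _ a) := by
  simp [msEmb]

lemma msEmb_succ {k : ℕ} (len : Fin (k+1) → ℕ) (i : Fin k) (a : Fin (len i.succ)) :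
    msEmb len i.succ a = Fin.cast (Fin.sum_univ_succ len).symm
      (Fin.natAdd (len 0) (msEmb (fun i => len i.succ) i a)) := by
  simp [msEmb]

lemma msEmb_sigma_inj {k : ℕ} (len : Fin k → ℕ) :
    ∀ {i i' : Fin k} {a : Fin (len i)} {a' : Fin (len i')},
      msEmb len i a = msEmb len i' a' →
        (⟨i, a⟩ : Σ i, Fin (len i)) = ⟨i', a'⟩ := by
  induction k with
  | zero => exact fun {i} => i.elim0
  | succ k ih =>
    intro i i' a a' h
    induction i using Fin.cases with
    | zero =>
      induction i' using Fin.cases with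
      | zero =>
        rw [msEmb_zero, msEmb_zero] at h
        have := Fin.castAdd_injective _ _ ((Fin.cast_injective _) h)
        rw [this]
      | succ i' =>
        rw [msEmb_zero, msEmb_succ] at h
        have := congrArg Fin.val h
        simp only [Fin.coe_cast, Fin.coe_castAdd, Fin.coe_natAdd] at this
        omega
    | succ i =>
      induction i' using Fin.cases with
      | zero =>
        rw [msEmb_succ, msEmb_zero] at h
        have := congrArg Fin.val h
        simp only [Fin.coe_cast, Fin.coe_castAdd, Fin.coe_natAdd] at this
        omega
      | succ i' =>
        rw [msEmb_succ, msEmb_succ] at h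
        have h2' := congrArg Fin.val h
        simp only [Fin.coe_cast, Fin.coe_natAdd] at h2'
        have h2 : msEmb (fun i => len i.succ) i a = msEmb (fun i => len i.succ) i' a' :=
          Fin.val_injective (by omega)
        have h3 := ih (fun i => len i.succ) h2
        obtain ⟨h4, h5⟩ := Sigma.ext_iff.mp h3
        dsimp only at h4
        subst h4
        simp only [heq_eq_eq] at h5
        subst h5
        rfl

lemma msEmb_sigma_surj {k : ℕ} (len : Fin k → ℕ) (j : Fin (∑ i, len i)) :
    ∃ (i : Fin k) (a : Fin (len i)), msEmb len i a = j := by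
  induction k with
  | zero => exact absurd j.2 (by simp)
  | succ k ih =>
    set j' : Fin (len 0 + ∑ i : Fin k, len i.succ) :=
      Fin.cast (Fin.sum_univ_succ len) j with hj'
    have hj : j = Fin.cast (Fin.sum_univ_succ len).symm j' := rfl
    rcases Nat.lt_or_ge j'.1 (len 0) with h | h
    · exact ⟨0, ⟨j'.1, h⟩, by rw [msEmb_zero, hj]; rfl⟩
    · set a : Fin (∑ i : Fin k, len i.succ) := ⟨j'.1 - len 0, by omega⟩ with ha
      obtain ⟨i, b, hb⟩ := ih (fun i => len i.succ) a
      refine ⟨i.succ, b, ?_⟩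
      rw [msEmb_succ, hb, hj]
      apply Fin.val_injective
      simp [ha]
      omega

end GCaux
set_option linter.unusedSectionVars false
namespace GCaux
open Finset Function

variable {G : Type*} [Group G] [DecidableEq G]

lemma mem_gcMultiSum_iff : ∀ {k : ℕ} {len : Fin k → ℕ}
    (D : ∀ i, Subgroup (Fin (len i) → G)) (x : Fin (∑ i, len i) → G),
    x ∈ gcMultiSum D ↔ ∀ i, (x ∘ msEmb len i) ∈ D i
  | 0, len, D, x => by
    refine ⟨fun _ i => i.elim0, fun _ => ?_⟩
    show x ∈ (⊤ : Subgroup _)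
    exact Subgroup.mem_top x
  | k+1, len, D, x => by
    have base : x ∈ gcMultiSum D ↔
        ((x ∘ msEmb len 0) ∈ D 0 ∧
          (fun j => x (Fin.cast (Fin.sum_univ_succ len).symm (Fin.natAdd (len 0) j)))
            ∈ gcMultiSum (fun i => D i.succ)) := by
      have e0 : (x ∘ msEmb len 0) =
          fun a => x (Fin.cast (Fin.sum_univ_succ len).symm (Fin.castAdd _ a)) := by
        funext a; rw [Function.comp_apply, msEmb_zero]
      rw [e0]; exact Iff.rfl
    rw [base, mem_gcMultiSum_iff, Fin.forall_fin_succ]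
    refine and_congr Iff.rfl (forall_congr' fun i => ?_)
    have e1 : (x ∘ msEmb len i.succ) =
        ((fun j => x (Fin.cast (Fin.sum_univ_succ len).symm (Fin.natAdd (len 0) j)))
          ∘ msEmb (fun i => len i.succ) i) := by
      funext a; simp only [Function.comp_apply]; rw [msEmb_succ]
    rw [e1]

noncomputable def msIdx {k : ℕ} (len : Fin k → ℕ) (j : Fin (∑ i, len i)) :
    Σ i, Fin (len i) :=
  ⟨(msEmb_sigma_surj len j).choose, (msEmb_sigma_surj len j).choose_spec.choose⟩

lemma msEmb_msIdx {k : ℕ} (len : Fin k → ℕ) (j : Fin (∑ i, len i)) :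
    msEmb len (msIdx len j).1 (msIdx len j).2 = j :=
  (msEmb_sigma_surj len j).choose_spec.choose_spec

lemma msIdx_msEmb {k : ℕ} (len : Fin k → ℕ) (i : Fin k) (a : Fin (len i)) :
    msIdx len (msEmb len i a) = ⟨i, a⟩ :=
  msEmb_sigma_inj len (msEmb_msIdx len _)

lemma hammingDist_blocks {k : ℕ} (len : Fin k → ℕ) (x y : Fin (∑ i, len i) → G) :
    hammingDist x y = ∑ i, hammingDist (x ∘ msEmb len i) (y ∘ msEmb len i) := by
  have e : ∀ i : Fin k, hammingDist (x ∘ msEmb len i) (y ∘ msEmb len i)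
      = (univ.filter fun a => x (msEmb len i a) ≠ y (msEmb len i a)).card := fun i => rfl
  simp only [e]
  rw [show (∑ i, (univ.filter fun a => x (msEmb len i a) ≠ y (msEmb len i a)).card)
      = (univ.sigma fun i => univ.filter fun a => x (msEmb len i a) ≠ y (msEmb len i a)).card
    from (Finset.card_sigma _ _).symm]
  show (univ.filter fun j => x j ≠ y j).card = _
  refine Finset.card_bij' (fun j _ => msIdx len j) (fun s _ => msEmb len s.1 s.2)
    ?_ ?_ ?_ ?_
  · intro j hj
    rw [Finset.mem_filter] at hj
    rw [Finset.mem_sigma]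
    refine ⟨Finset.mem_univ _, ?_⟩
    rw [Finset.mem_filter]
    refine ⟨Finset.mem_univ _, ?_⟩
    rw [msEmb_msIdx]
    exact hj.2
  · intro s hs
    rw [Finset.mem_sigma, Finset.mem_filter] at hs
    rw [Finset.mem_filter]
    exact ⟨Finset.mem_univ _, hs.2.2⟩
  · intro j _; exact msEmb_msIdx len j
  · intro s _
    exact msIdx_msEmb len s.1 s.2

variable {N M : ℕ}

noncomputable def extAlong (u : Fin M → Fin N) (z : Fin M → G) : Fin N → G :=
  fun ℓ => if h : ∃ a, u a = ℓ then z h.choose else 1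

lemma extAlong_mul (u : Fin M → Fin N) (z w : Fin M → G) :
    extAlong u (z * w) = extAlong u z * extAlong u w := by
  funext ℓ; simp only [extAlong, Pi.mul_apply]
  split <;> simp

lemma extAlong_inv (u : Fin M → Fin N) (z : Fin M → G) :
    extAlong u z⁻¹ = (extAlong u z)⁻¹ := by
  funext ℓ; simp only [extAlong, Pi.inv_apply]
  split <;> simp

lemma extAlong_one (u : Fin M → Fin N) : extAlong (G := G) u 1 = 1 := by
  funext ℓ; simp only [extAlong]; split <;> rfl

lemma extAlong_apply_of_ne (u : Fin M → Fin N) (z : Fin M → G) {ℓ}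
    (h : ∀ a, u a ≠ ℓ) : extAlong u z ℓ = 1 := by
  simp only [extAlong]
  rw [dif_neg]
  rintro ⟨a, ha⟩; exact h a ha

lemma extAlong_apply {u : Fin M → Fin N} (hu : Function.Injective u) (z : Fin M → G)
    (a : Fin M) : extAlong u z (u a) = z a := by
  simp only [extAlong]
  rw [dif_pos ⟨a, rfl⟩]
  congr 1
  exact hu (Exists.choose_spec (⟨a, rfl⟩ : ∃ b, u b = u a))

lemma extAlong_comp {u : Fin M → Fin N} (hu : Function.Injective u) (z : Fin M → G) :
    (extAlong u z) ∘ u = z := by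
  funext a; exact extAlong_apply hu z a

noncomputable def pullCode (u : Fin M → Fin N) (C : Subgroup (Fin N → G)) :
    Subgroup (Fin M → G) where
  carrier := {z | extAlong u z ∈ C}
  one_mem' := by
    show extAlong u (1 : Fin M → G) ∈ C
    rw [extAlong_one]; exact one_mem C
  mul_mem' := by
    intro a b ha hb
    show extAlong u (a * b) ∈ C
    rw [extAlong_mul]; exact mul_mem ha hb
  inv_mem' := by
    intro a ha
    show extAlong u a⁻¹ ∈ C
    rw [extAlong_inv]; exact inv_mem ha

lemma mem_pullCode {u : Fin M → Fin N} {C : Subgroup (Fin N → G)} {z : Fin M → G} :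
    z ∈ pullCode u C ↔ extAlong u z ∈ C := Iff.rfl

lemma hd_comp_le (v : Fin M → Fin N) (hv : Function.Injective v) (x y : Fin N → G) :
    hammingDist (x ∘ v) (y ∘ v) ≤ hammingDist x y := by
  refine Finset.card_le_card_of_injOn v ?_ ?_
  · intro a ha
    rw [Finset.mem_coe, Finset.mem_filter] at ha ⊢
    exact ⟨Finset.mem_univ _, ha.2⟩
  · exact fun a _ b _ h => hv h

lemma hd_extAlong_le {u : Fin M → Fin N} (hu : Function.Injective u) (z w : Fin M → G) :
    hammingDist (extAlong u z) (extAlong u w) ≤ hammingDist z w := by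
  have hsub : (univ.filter fun ℓ => extAlong u z ℓ ≠ extAlong u w ℓ)
      ⊆ (univ.filter fun a => z a ≠ w a).image u := by
    intro ℓ hℓ
    rw [Finset.mem_filter] at hℓ
    by_cases h : ∃ a, u a = ℓ
    · obtain ⟨a, rfl⟩ := h
      rw [extAlong_apply hu, extAlong_apply hu] at hℓ
      exact Finset.mem_image.mpr ⟨a, Finset.mem_filter.mpr ⟨Finset.mem_univ _, hℓ.2⟩, rfl⟩
    · exfalso
      rw [extAlong_apply_of_ne u z (fun a ha => h ⟨a, ha⟩),
        extAlong_apply_of_ne u w (fun a ha => h ⟨a, ha⟩)] at hℓ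
      exact hℓ.2 rfl
  exact le_trans (Finset.card_le_card hsub) (Finset.card_image_le)

def restr (T : Finset (Fin N)) (x : Fin N → G) : Fin N → G :=
  fun ℓ => if ℓ ∈ T then x ℓ else 1

lemma restr_mul_compl (T : Finset (Fin N)) (x : Fin N → G) :
    restr T x * restr Tᶜ x = x := by
  funext ℓ
  simp only [Pi.mul_apply, restr, Finset.mem_compl]
  by_cases h : ℓ ∈ T <;> simp [h]

def rng (u : Fin M → Fin N) : Finset (Fin N) := univ.image u

lemma mem_rng {u : Fin M → Fin N} {ℓ : Fin N} : ℓ ∈ rng u ↔ ∃ a, u a = ℓ := by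
  simp [rng]

end GCaux
set_option linter.unusedSectionVars false
namespace GCaux
open Finset Function

variable {G : Type*} [Group G] [DecidableEq G] {N : ℕ}

lemma hd_one_eq (y : Fin N → G) :
    hammingDist y 1 = (univ.filter fun i => y i ≠ 1).card := by
  simp [hammingDist]

lemma wt_le_one_support {y : Fin N → G} (h : hammingDist y 1 ≤ 1) {a b : Fin N}
    (ha : y a ≠ 1) (hb : b ≠ a) : y b = 1 := by
  by_contra hb1
  have h2 : 1 < (univ.filter fun i => y i ≠ 1).card :=
    Finset.one_lt_card.mpr ⟨b, mem_filter.mpr ⟨mem_univ _, hb1⟩,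
      a, mem_filter.mpr ⟨mem_univ _, ha⟩, hb⟩
  rw [hd_one_eq] at h
  omega

lemma wt_single_le (i : Fin N) (g : G) :
    hammingDist (Pi.mulSingle i g : Fin N → G) 1 ≤ 1 := by
  rw [hd_one_eq]
  have hsub : (univ.filter fun a => (Pi.mulSingle i g : Fin N → G) a ≠ 1) ⊆ {i} := by
    intro a ha
    rw [mem_filter, Pi.mulSingle_apply] at ha
    rw [Finset.mem_singleton]
    by_contra hne
    rw [if_neg hne] at ha
    exact ha.2 rfl
  exact le_trans (Finset.card_le_card hsub) (by simp)

lemma wt_single_eq {g : G} (hg : g ≠ 1) (i : Fin N) :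
    hammingDist (Pi.mulSingle i g : Fin N → G) 1 = 1 := by
  rw [hd_one_eq]
  have : (univ.filter fun a => (Pi.mulSingle i g : Fin N → G) a ≠ 1) = {i} := by
    ext a
    simp only [mem_filter, mem_univ, true_and, Finset.mem_singleton, Pi.mulSingle_apply]
    by_cases h : a = i <;> simp [h, hg]
  rw [this, Finset.card_singleton]

lemma monomial [Nontrivial G] (φ : MulAut (Fin N → G))
    (hd : ∀ x y : Fin N → G, hammingDist (φ x) (φ y) = hammingDist x y) :
    ∃ σ : Equiv.Perm (Fin N), ∀ (x : Fin N → G) (j : Fin N), (φ x (σ j) = 1 ↔ x j = 1) := by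
  obtain ⟨g0, hg0⟩ := exists_ne (1 : G)
  have hw : ∀ x : Fin N → G, hammingDist (φ x) 1 = hammingDist x 1 := by
    intro x; have := hd x 1; rwa [map_one] at this
  have huniq : ∀ i : Fin N, ∃ j, φ (Pi.mulSingle i g0) j ≠ 1 ∧
      ∀ j', j' ≠ j → φ (Pi.mulSingle i g0) j' = 1 := by
    intro i
    have h1 : hammingDist (φ (Pi.mulSingle i g0)) 1 = 1 := by
      rw [hw]; exact wt_single_eq hg0 i
    rw [hd_one_eq] at h1
    obtain ⟨j, hj⟩ := Finset.card_eq_one.mp h1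
    refine ⟨j, ?_, ?_⟩
    · have : j ∈ (univ.filter fun a => φ (Pi.mulSingle i g0) a ≠ 1) := by
        rw [hj]; exact Finset.mem_singleton_self j
      exact (mem_filter.mp this).2
    · intro j' hne
      by_contra h
      have : j' ∈ ({j} : Finset _) := by
        rw [← hj]; exact mem_filter.mpr ⟨mem_univ _, h⟩
      exact hne (Finset.mem_singleton.mp this)
  choose σ0 hσa hσb using huniq
  have K : ∀ (i : Fin N) (g : G) (j : Fin N), j ≠ σ0 i → φ (Pi.mulSingle i g) j = 1 := by
    intro i g j hj
    by_contra hne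
    have hwv : hammingDist (φ (Pi.mulSingle i g)) 1 ≤ 1 := by
      rw [hw]; exact wt_single_le i g
    have hv0 : φ (Pi.mulSingle i g) (σ0 i) = 1 := wt_le_one_support hwv hne hj.symm
    have hww : ((Pi.mulSingle i g : Fin N → G))⁻¹ * Pi.mulSingle i g0 = Pi.mulSingle i (g⁻¹ * g0) := by
      funext a
      simp only [Pi.mul_apply, Pi.inv_apply, Pi.mulSingle_apply]
      by_cases h : a = i <;> simp [h]
    have hw2 : hammingDist (φ ((Pi.mulSingle i g)⁻¹ * Pi.mulSingle i g0)) 1 ≤ 1 := by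
      rw [hw, hww]; exact wt_single_le i _
    have hval : ∀ a, φ ((Pi.mulSingle i g)⁻¹ * Pi.mulSingle i g0) a
        = (φ (Pi.mulSingle i g) a)⁻¹ * φ (Pi.mulSingle i g0) a := by
      intro a; rw [map_mul, map_inv]; rfl
    have c1 : φ ((Pi.mulSingle i g)⁻¹ * Pi.mulSingle i g0) j ≠ 1 := by
      rw [hval, hσb i j hj, mul_one]
      simp [hne]
    have c2 : φ ((Pi.mulSingle i g)⁻¹ * Pi.mulSingle i g0) (σ0 i) ≠ 1 := by
      rw [hval, hv0, inv_one, one_mul]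
      exact hσa i
    exact absurd (wt_le_one_support hw2 c1 hj.symm) c2
  have hinj : Function.Injective σ0 := by
    intro i i' he
    by_contra hne
    set x := (Pi.mulSingle i g0 : Fin N → G) * Pi.mulSingle i' g0 with hx
    have hvalx : ∀ a, φ x a = φ (Pi.mulSingle i g0) a * φ (Pi.mulSingle i' g0) a := by
      intro a; rw [hx, map_mul]; rfl
    have hwx : hammingDist x 1 = 2 := by
      rw [hd_one_eq]
      have hset : (univ.filter fun a => x a ≠ 1) = {i, i'} := by
        ext a
        simp only [mem_filter, mem_univ, true_and, Finset.mem_insert, Finset.mem_singleton,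
          hx, Pi.mul_apply, Pi.mulSingle_apply]
        by_cases h1 : a = i <;> by_cases h2 : a = i'
        · exact absurd (h1 ▸ h2) hne
        · simp only [h1, h2, if_true, if_false, if_neg hne, mul_one]
          simp [h1, h2, hg0]
        · simp only [h1, h2, if_true, if_false, if_neg (fun h => hne (Eq.symm h)), one_mul]
          simp [h1, h2, hg0]
        · simp [h1, h2]
      rw [hset, Finset.card_insert_of_notMem (by simp [hne]), Finset.card_singleton]
    have hsub : (univ.filter fun a => φ x a ≠ 1) ⊆ {σ0 i} := by
      intro a ha
      rw [mem_filter] at ha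
      rw [Finset.mem_singleton]
      by_contra hna
      have h2 : φ x a = 1 := by
        rw [hvalx, K i g0 a hna, K i' g0 a (he ▸ hna), one_mul]
      exact ha.2 h2
    have hle : hammingDist (φ x) 1 ≤ 1 := by
      rw [hd_one_eq]
      exact le_trans (Finset.card_le_card hsub) (by simp)
    rw [hw, hwx] at hle
    omega
  have C1 : ∀ (n : ℕ) (y : Fin N → G) (j : Fin N), hammingDist y 1 ≤ n → y j = 1 →
      φ y (σ0 j) = 1 := by
    intro n
    induction n with
    | zero =>
      intro y j hy hyj
      have : y = 1 := hammingDist_eq_zero.mp (Nat.le_zero.mp hy)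
      rw [this, map_one]; rfl
    | succ n ih =>
      intro y j hy hyj
      by_cases h1 : y = 1
      · rw [h1, map_one]; rfl
      obtain ⟨i, hi⟩ : ∃ i, y i ≠ 1 := by
        by_contra h; push_neg at h; exact h1 (funext h)
      have hij : i ≠ j := fun h => hi (h ▸ hyj)
      have hdec : y = Pi.mulSingle i (y i) * Function.update y i 1 := by
        funext a
        by_cases ha : a = i
        · subst ha; simp
        · simp [Pi.mulSingle_apply, ha, Function.update_of_ne ha]
      have hcard : hammingDist (Function.update y i 1) 1 ≤ n := by
        rw [hd_one_eq]
        have hsub : (univ.filter fun a => Function.update y i 1 a ≠ 1)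
            ⊆ (univ.filter fun a => y a ≠ 1).erase i := by
          intro a ha'
          rw [mem_filter] at ha'
          rw [Finset.mem_erase, mem_filter]
          rcases eq_or_ne a i with rfl | hne
          · exact absurd (by simp) ha'.2
          · obtain ⟨_, ha2⟩ := ha'
            refine ⟨hne, mem_univ _, ?_⟩
            rwa [Function.update_of_ne hne] at ha2
        have hmem : i ∈ (univ.filter fun a => y a ≠ 1) := mem_filter.mpr ⟨mem_univ _, hi⟩
        have h2 := Finset.card_erase_of_mem hmem
        have h3 := Finset.card_le_card hsub
        rw [hd_one_eq] at hy
        omega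
      have hstep : φ y (σ0 j) = φ (Pi.mulSingle i (y i)) (σ0 j)
          * φ (Function.update y i 1) (σ0 j) := by
        conv_lhs => rw [hdec]
        rw [map_mul]; rfl
      rw [hstep, K i (y i) (σ0 j) (fun h => hij (hinj h).symm), one_mul]
      exact ih _ j hcard (by rwa [Function.update_of_ne (Ne.symm hij)])
  refine ⟨Equiv.ofBijective σ0 (Finite.injective_iff_bijective.mp hinj), ?_⟩
  intro x j
  show φ x (σ0 j) = 1 ↔ x j = 1
  have hdec : x = Pi.mulSingle j (x j) * Function.update x j 1 := by
    funext a
    by_cases ha : a = j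
    · subst ha; simp
    · simp [Pi.mulSingle_apply, ha, Function.update_of_ne ha]
  have h1 : φ (Function.update x j 1) (σ0 j) = 1 :=
    C1 (hammingDist (Function.update x j 1) 1) _ j le_rfl (by simp)
  have hstep : φ x (σ0 j) = φ (Pi.mulSingle j (x j)) (σ0 j)
      * φ (Function.update x j 1) (σ0 j) := by
    conv_lhs => rw [hdec]
    rw [map_mul]; rfl
  rw [hstep, h1, mul_one]
  constructor
  · intro h
    by_contra hxj
    have hwt : hammingDist (φ (Pi.mulSingle j (x j))) 1 = 1 := by
      rw [hw]; exact wt_single_eq hxj j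
    have hall : ∀ a, φ (Pi.mulSingle j (x j)) a = 1 := by
      intro a
      rcases eq_or_ne a (σ0 j) with rfl | hne
      · exact h
      · exact K j (x j) a hne
    rw [hd_one_eq] at hwt
    have hempty : (univ.filter fun a => φ (Pi.mulSingle j (x j)) a ≠ 1) = ∅ := by
      ext a; simp [hall a]
    rw [hempty] at hwt
    simp at hwt
  · intro h
    rw [h, Pi.mulSingle_one, map_one]
    rfl

end GCaux
set_option linter.unusedSectionVars false
namespace GCaux
open Finset Function

variable {G : Type*} [Group G] [DecidableEq G] {N M M' : ℕ}

noncomputable def transF (φ : MulAut (Fin N → G)) (u : Fin M → Fin N)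
    (v : Fin M' → Fin N) (z : Fin M → G) : Fin M' → G :=
  fun j => φ (extAlong u z) (v j)

lemma inv_perm_prop (φ : MulAut (Fin N → G)) (σ : Equiv.Perm (Fin N))
    (hσ : ∀ x j, φ x (σ j) = 1 ↔ x j = 1) :
    ∀ y j, φ⁻¹ y (σ.symm j) = 1 ↔ y j = 1 := by
  intro y j
  have := hσ (φ⁻¹ y) (σ.symm j)
  rw [Equiv.apply_symm_apply, MulAut.apply_inv_self] at this
  exact this.symm

lemma inv_dist (φ : MulAut (Fin N → G))
    (hd : ∀ x y : Fin N → G, hammingDist (φ x) (φ y) = hammingDist x y) :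
    ∀ x y : Fin N → G, hammingDist (φ⁻¹ x) (φ⁻¹ y) = hammingDist x y := by
  intro x y
  have := hd (φ⁻¹ x) (φ⁻¹ y)
  rw [MulAut.apply_inv_self, MulAut.apply_inv_self] at this
  exact this.symm

lemma inv_memC {C : Subgroup (Fin N → G)} (φ : MulAut (Fin N → G))
    (hC : ∀ x, φ x ∈ C ↔ x ∈ C) : ∀ x, φ⁻¹ x ∈ C ↔ x ∈ C := by
  intro x
  have := hC (φ⁻¹ x)
  rw [MulAut.apply_inv_self] at this
  exact this.symm

lemma transF_ext_eq (φ : MulAut (Fin N → G)) (σ : Equiv.Perm (Fin N))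
    (hσ : ∀ x j, φ x (σ j) = 1 ↔ x j = 1)
    {u : Fin M → Fin N} (hu : Function.Injective u)
    {v : Fin M' → Fin N} (hv : Function.Injective v)
    (huv : ∀ a, ∃ j', v j' = σ (u a)) (z : Fin M → G) :
    extAlong v (transF φ u v z) = φ (extAlong u z) := by
  funext ℓ
  by_cases h : ∃ j', v j' = ℓ
  · obtain ⟨j, rfl⟩ := h
    rw [extAlong_apply hv]
    rfl
  · rw [extAlong_apply_of_ne v _ (fun a ha => h ⟨a, ha⟩)]
    have hℓ : φ (extAlong u z) (σ (σ.symm ℓ)) = 1 := by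
      rw [hσ]
      apply extAlong_apply_of_ne
      intro a ha
      obtain ⟨j', hj'⟩ := huv a
      apply h
      refine ⟨j', ?_⟩
      rw [hj', ha, Equiv.apply_symm_apply]
    rw [Equiv.apply_symm_apply] at hℓ
    exact hℓ.symm

lemma transF_mul (φ : MulAut (Fin N → G)) (u : Fin M → Fin N) (v : Fin M' → Fin N)
    (z w : Fin M → G) :
    transF φ u v (z * w) = transF φ u v z * transF φ u v w := by
  funext j
  simp only [transF, extAlong_mul, map_mul, Pi.mul_apply]

lemma transF_mem {C : Subgroup (Fin N → G)} (φ : MulAut (Fin N → G))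
    (hC : ∀ x, φ x ∈ C ↔ x ∈ C) (σ : Equiv.Perm (Fin N))
    (hσ : ∀ x j, φ x (σ j) = 1 ↔ x j = 1)
    {u : Fin M → Fin N} (hu : Function.Injective u)
    {v : Fin M' → Fin N} (hv : Function.Injective v)
    (huv : ∀ a, ∃ j', v j' = σ (u a)) {z : Fin M → G}
    (hz : z ∈ pullCode u C) : transF φ u v z ∈ pullCode v C := by
  rw [mem_pullCode, transF_ext_eq φ σ hσ hu hv huv]
  exact (hC _).mpr hz

lemma transF_dist_le (φ : MulAut (Fin N → G))
    (hd : ∀ x y : Fin N → G, hammingDist (φ x) (φ y) = hammingDist x y)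
    {u : Fin M → Fin N} (hu : Function.Injective u)
    {v : Fin M' → Fin N} (hv : Function.Injective v) (z w : Fin M → G) :
    hammingDist (transF φ u v z) (transF φ u v w) ≤ hammingDist z w := by
  have e1 : transF φ u v z = (φ (extAlong u z)) ∘ v := rfl
  have e2 : transF φ u v w = (φ (extAlong u w)) ∘ v := rfl
  rw [e1, e2]
  calc hammingDist ((φ (extAlong u z)) ∘ v) ((φ (extAlong u w)) ∘ v)
      ≤ hammingDist (φ (extAlong u z)) (φ (extAlong u w)) := hd_comp_le v hv _ _
    _ = hammingDist (extAlong u z) (extAlong u w) := hd _ _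
    _ ≤ hammingDist z w := hd_extAlong_le hu z w

lemma transF_left_inv (φ : MulAut (Fin N → G)) (σ : Equiv.Perm (Fin N))
    (hσ : ∀ x j, φ x (σ j) = 1 ↔ x j = 1)
    {u : Fin M → Fin N} (hu : Function.Injective u)
    {v : Fin M' → Fin N} (hv : Function.Injective v)
    (huv : ∀ a, ∃ j', v j' = σ (u a)) (z : Fin M → G) :
    transF φ⁻¹ v u (transF φ u v z) = z := by
  funext a
  show φ⁻¹ (extAlong v (transF φ u v z)) (u a) = z a
  rw [transF_ext_eq φ σ hσ hu hv huv, MulAut.inv_apply_self, extAlong_apply hu]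

lemma transport_iso (C : Subgroup (Fin N → G)) (φ : MulAut (Fin N → G))
    (hd : ∀ x y : Fin N → G, hammingDist (φ x) (φ y) = hammingDist x y)
    (hC : ∀ x, φ x ∈ C ↔ x ∈ C)
    (σ : Equiv.Perm (Fin N)) (hσ : ∀ x j, φ x (σ j) = 1 ↔ x j = 1)
    {u : Fin M → Fin N} (hu : Function.Injective u)
    {v : Fin M' → Fin N} (hv : Function.Injective v)
    (huv : ∀ a, ∃ j', v j' = σ (u a)) (hvu : ∀ j', ∃ a, σ (u a) = v j') :
    GroupCodeIso (pullCode u C) (pullCode v C) := by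
  have hσ' := inv_perm_prop φ σ hσ
  have hd' := inv_dist φ hd
  have hC' := inv_memC φ hC
  have huv' : ∀ j', ∃ a, u a = σ.symm (v j') := by
    intro j'
    obtain ⟨a, ha⟩ := hvu j'
    exact ⟨a, by rw [← ha, Equiv.symm_apply_apply]⟩
  have hvu' : ∀ a, ∃ j', σ.symm (v j') = u a := by
    intro a
    obtain ⟨j', hj'⟩ := huv a
    exact ⟨j', by rw [hj', Equiv.symm_apply_apply]⟩
  refine ⟨transF φ u v, transF φ⁻¹ v u,
    ⟨transF_mul φ u v, fun z hz => transF_mem φ hC σ hσ hu hv huv hz,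
      transF_dist_le φ hd hu hv⟩,
    ⟨transF_mul φ⁻¹ v u, fun z hz => transF_mem φ⁻¹ hC' σ.symm hσ' hv hu huv' hz,
      transF_dist_le φ⁻¹ hd' hv hu⟩,
    fun z => transF_left_inv φ σ hσ hu hv huv z,
    fun w => ?_⟩
  have := transF_left_inv φ⁻¹ σ.symm hσ' hv hu huv' w
  rwa [inv_inv] at this

end GCaux
set_option linter.unusedSectionVars false
set_option maxHeartbeats 1000000
namespace GCaux
open Finset Function

variable {G : Type*} [Group G] [DecidableEq G]

section Main

variable {k : ℕ}

/-- total length -/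
abbrev NN (m α : Fin k → ℕ) : ℕ := ∑ t, ∑ _ : Fin (α t), m t

variable (m α : Fin k → ℕ)

def topE (t : Fin k) : Fin (∑ _ : Fin (α t), m t) → Fin (NN m α) :=
  msEmb (fun t => ∑ _ : Fin (α t), m t) t

def copyE (b : Σ t, Fin (α t)) : Fin (m b.1) → Fin (NN m α) :=
  topE m α b.1 ∘ msEmb (fun _ : Fin (α b.1) => m b.1) b.2

lemma msEmb_inj {k' : ℕ} (len : Fin k' → ℕ) (i : Fin k') :
    Function.Injective (msEmb len i) := by
  intro a a' h
  have h2 := msEmb_sigma_inj len h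
  have h3 := (Sigma.ext_iff.mp h2).2
  exact eq_of_heq h3

lemma msEmb_ne {k' : ℕ} (len : Fin k' → ℕ) {i i' : Fin k'} (hne : i ≠ i')
    (a : Fin (len i)) (a' : Fin (len i')) : msEmb len i a ≠ msEmb len i' a' := by
  intro h
  exact hne (Sigma.ext_iff.mp (msEmb_sigma_inj len h)).1

lemma topE_inj (t : Fin k) : Function.Injective (topE m α t) :=
  msEmb_inj _ t

lemma copyE_inj (b : Σ t, Fin (α t)) : Function.Injective (copyE m α b) :=
  (topE_inj m α b.1).comp (msEmb_inj _ b.2)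

lemma copyE_sigma_inj {b b' : Σ t, Fin (α t)} {a : Fin (m b.1)} {a' : Fin (m b'.1)}
    (h : copyE m α b a = copyE m α b' a') : b = b' := by
  obtain ⟨t, i⟩ := b
  obtain ⟨t', i'⟩ := b'
  have h1 := msEmb_sigma_inj (fun t => ∑ _ : Fin (α t), m t) h
  have ht : t = t' := (Sigma.ext_iff.mp h1).1
  subst ht
  have h2 : msEmb (fun _ : Fin (α t) => m t) i a = msEmb (fun _ : Fin (α t) => m t) i' a' :=
    eq_of_heq (Sigma.ext_iff.mp h1).2
  have h3 := msEmb_sigma_inj (fun _ : Fin (α t) => m t) h2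
  have hi : i = i' := (Sigma.ext_iff.mp h3).1
  subst hi
  rfl

lemma copyE_surj (ℓ : Fin (NN m α)) :
    ∃ (b : Σ t, Fin (α t)) (a : Fin (m b.1)), copyE m α b a = ℓ := by
  obtain ⟨t, i, hi⟩ := msEmb_sigma_surj (fun t => ∑ _ : Fin (α t), m t) ℓ
  obtain ⟨j, a, ha⟩ := msEmb_sigma_surj (fun _ : Fin (α t) => m t) i
  exact ⟨⟨t, j⟩, a, by rw [← hi, ← ha]; rfl⟩

variable (D : ∀ j, Subgroup (Fin (m j) → G))

lemma memC_iff (x : Fin (NN m α) → G) :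
    x ∈ gcMultiSum (fun t => gcPow (D t) (α t)) ↔
      ∀ b : Σ t, Fin (α t), x ∘ copyE m α b ∈ D b.1 := by
  rw [mem_gcMultiSum_iff]
  constructor
  · intro h b
    have h2 := (mem_gcMultiSum_iff (fun _ : Fin (α b.1) => D b.1)
      (x ∘ topE m α b.1)).mp (h b.1) b.2
    exact h2
  · intro h t
    show x ∘ topE m α t ∈ gcMultiSum (fun _ : Fin (α t) => D t)
    rw [mem_gcMultiSum_iff]
    intro i
    exact h ⟨t, i⟩

lemma memC_top_iff (x : Fin (NN m α) → G) :
    x ∈ gcMultiSum (fun t => gcPow (D t) (α t)) ↔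
      ∀ t, x ∘ topE m α t ∈ gcPow (D t) (α t) :=
  mem_gcMultiSum_iff _ x

lemma restr_memC {x : Fin (NN m α) → G}
    (hx : x ∈ gcMultiSum (fun t => gcPow (D t) (α t))) (T : Finset (Fin (NN m α)))
    (hT : ∀ b : Σ t, Fin (α t), (∀ a, copyE m α b a ∈ T) ∨ (∀ a, copyE m α b a ∉ T)) :
    restr T x ∈ gcMultiSum (fun t => gcPow (D t) (α t)) := by
  rw [memC_iff] at hx ⊢
  intro b
  rcases hT b with h | h
  · have e : (restr T x) ∘ copyE m α b = x ∘ copyE m α b := by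
      funext a
      simp [restr, h a]
    rw [e]; exact hx b
  · have e : (restr T x) ∘ copyE m α b = (1 : Fin (m b.1) → G) := by
      funext a
      simp [restr, h a]
    rw [e]; exact one_mem _

lemma pull_copyE (b : Σ t, Fin (α t)) :
    pullCode (copyE m α b) (gcMultiSum (fun t => gcPow (D t) (α t))) = D b.1 := by
  ext z
  rw [mem_pullCode, memC_iff]
  constructor
  · intro h
    have := h b
    rwa [extAlong_comp (copyE_inj m α b)] at this
  · intro hz b'
    rcases eq_or_ne b' b with rfl | hne
    · rwa [extAlong_comp (copyE_inj m α b')]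
    · have e : (extAlong (copyE m α b) z) ∘ copyE m α b' = (1 : Fin (m b'.1) → G) := by
        funext a'
        refine extAlong_apply_of_ne _ _ (fun a ha => ?_)
        exact hne (copyE_sigma_inj m α ha).symm
      rw [e]; exact one_mem _

lemma pull_topE (t : Fin k) :
    pullCode (topE m α t) (gcMultiSum (fun t => gcPow (D t) (α t)))
      = gcPow (D t) (α t) := by
  ext y
  rw [mem_pullCode, memC_top_iff]
  constructor
  · intro h
    have := h t
    rwa [extAlong_comp (topE_inj m α t)] at this
  · intro hy s
    rcases eq_or_ne s t with rfl | hne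
    · rwa [extAlong_comp (topE_inj m α s)]
    · have e : (extAlong (topE m α t) y) ∘ topE m α s = (1 : Fin _ → G) := by
        funext i
        refine extAlong_apply_of_ne _ _ (fun a ha => ?_)
        exact (msEmb_ne (fun t => ∑ _ : Fin (α t), m t) (Ne.symm hne) a i) ha
      rw [e]; exact one_mem _

lemma fin_add_key {p q : ℕ} (j : Fin (p + q)) :
    (∃ i : Fin p, j = Fin.castAdd q i) ∨ (∃ i : Fin q, j = Fin.natAdd p i) := by
  rcases Nat.lt_or_ge j.1 p with h1 | h1
  · exact Or.inl ⟨⟨j.1, h1⟩, Fin.ext rfl⟩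
  · exact Or.inr ⟨⟨j.1 - p, by omega⟩, Fin.ext (by simp only [Fin.coe_natAdd]; omega)⟩

lemma addCases_injective {p q : ℕ} {X : Type*} (f : Fin p → X) (g : Fin q → X)
    (hf : Function.Injective f) (hg : Function.Injective g)
    (hfg : ∀ i j, f i ≠ g j) :
    Function.Injective (Fin.addCases f g : Fin (p + q) → X) := by
  intro j j' h
  change Fin.addCases (motive := fun _ => X) f g j
    = Fin.addCases (motive := fun _ => X) f g j' at h
  rcases fin_add_key j with ⟨i, rfl⟩ | ⟨i, rfl⟩ <;>
      rcases fin_add_key j' with ⟨i', rfl⟩ | ⟨i', rfl⟩ <;>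
    simp only [Fin.addCases_left, Fin.addCases_right] at h
  · rw [hf h]
  · exact absurd h (hfg _ _)
  · exact absurd h.symm (hfg _ _)
  · rw [hg h]

lemma addCases_range {p q : ℕ} {X : Type*} (f : Fin p → X) (g : Fin q → X)
    {ℓ : X} (h : ∃ s : Fin (p + q), Fin.addCases f g s = ℓ) :
    (∃ i, f i = ℓ) ∨ (∃ j, g j = ℓ) := by
  obtain ⟨s, hs⟩ := h
  change Fin.addCases (motive := fun _ => X) f g s = ℓ at hs
  rcases fin_add_key s with ⟨i, rfl⟩ | ⟨i, rfl⟩ <;>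
    simp only [Fin.addCases_left, Fin.addCases_right] at hs
  · exact Or.inl ⟨_, hs⟩
  · exact Or.inr ⟨_, hs⟩

end Main
end GCaux
set_option linter.unusedSectionVars false
set_option maxHeartbeats 1000000
namespace GCaux
open Finset Function

variable {G : Type*} [Group G] [DecidableEq G] {k : ℕ} (m α : Fin k → ℕ)
variable (D : ∀ j, Subgroup (Fin (m j) → G))

lemma step1
    (hind : ∀ j, ¬ GCDecomposable (D j))
    (φ : MulAut (Fin (NN m α) → G))
    (hd : ∀ x y, hammingDist (φ x) (φ y) = hammingDist x y)
    (hC : ∀ x, φ x ∈ gcMultiSum (fun t => gcPow (D t) (α t)) ↔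
      x ∈ gcMultiSum (fun t => gcPow (D t) (α t)))
    (σ : Equiv.Perm (Fin (NN m α))) (hσ : ∀ x j, φ x (σ j) = 1 ↔ x j = 1)
    (blk : Fin (NN m α) → Σ t, Fin (α t)) (loc : ∀ ℓ, Fin (m (blk ℓ).1))
    (hblk : ∀ ℓ, copyE m α (blk ℓ) (loc ℓ) = ℓ)
    (b : Σ t, Fin (α t)) (a a' : Fin (m b.1)) :
    blk (σ (copyE m α b a)) = blk (σ (copyE m α b a')) := by
  by_contra hne
  set Cc := gcMultiSum (fun t => gcPow (D t) (α t)) with hCc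
  set b1 := blk (σ (copyE m α b a)) with hb1
  set P1 : Finset (Fin (m b.1)) :=
    univ.filter (fun a0 => blk (σ (copyE m α b a0)) = b1) with hP1
  set p := P1.card with hp
  set q := P1ᶜ.card with hq
  set e1 : Fin p → Fin (m b.1) := fun i => (P1.equivFin.symm i).1 with he1
  set e2 : Fin q → Fin (m b.1) := fun i => ((P1ᶜ).equivFin.symm i).1 with he2
  have he1P : ∀ i, e1 i ∈ P1 := fun i => (P1.equivFin.symm i).2
  have he2P : ∀ i, e2 i ∈ P1ᶜ := fun i => ((P1ᶜ).equivFin.symm i).2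
  have he1inj : Function.Injective e1 :=
    fun i i' h => P1.equivFin.symm.injective (Subtype.ext h)
  have he2inj : Function.Injective e2 :=
    fun i i' h => (P1ᶜ).equivFin.symm.injective (Subtype.ext h)
  have he1surj : ∀ a0 ∈ P1, ∃ i, e1 i = a0 := fun a0 h0 =>
    ⟨P1.equivFin ⟨a0, h0⟩, by simp only [he1, Equiv.symm_apply_apply]⟩
  have he2surj : ∀ a0 ∈ P1ᶜ, ∃ i, e2 i = a0 := fun a0 h0 =>
    ⟨(P1ᶜ).equivFin ⟨a0, h0⟩, by simp only [he2, Equiv.symm_apply_apply]⟩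
  set v1 : Fin p → Fin (NN m α) := fun i => σ (copyE m α b (e1 i)) with hv1def
  set v2 : Fin q → Fin (NN m α) := fun i => σ (copyE m α b (e2 i)) with hv2def
  have hv1inj : Function.Injective v1 := by
    intro i i' h
    simp only [hv1def] at h
    exact he1inj (copyE_inj m α b (σ.injective h))
  have hv2inj : Function.Injective v2 := by
    intro i i' h
    simp only [hv2def] at h
    exact he2inj (copyE_inj m α b (σ.injective h))
  have hv12 : ∀ i j, v1 i ≠ v2 j := by
    intro i j h
    simp only [hv1def, hv2def] at h
    have heq : e1 i = e2 j := copyE_inj m α b (σ.injective h)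
    have h2 := he2P j
    rw [Finset.mem_compl, ← heq] at h2
    exact h2 (he1P i)
  set v : Fin (p + q) → Fin (NN m α) :=
    Fin.addCases (motive := fun _ => Fin (NN m α)) v1 v2 with hvdef
  have hvl : ∀ i, v (Fin.castAdd q i) = v1 i := by
    intro i; simp only [hvdef]; exact Fin.addCases_left i
  have hvr : ∀ i, v (Fin.natAdd p i) = v2 i := by
    intro i; simp only [hvdef]; exact Fin.addCases_right i
  have hvinj : Function.Injective v := by
    simp only [hvdef]
    exact addCases_injective v1 v2 hv1inj hv2inj hv12
  have hrng_decomp : ∀ ℓ, ℓ ∈ rng v → (∃ i, v1 i = ℓ) ∨ (∃ j, v2 j = ℓ) := by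
    intro ℓ h
    have h2 := mem_rng.mp h
    simp only [hvdef] at h2
    exact addCases_range v1 v2 h2
  have huv : ∀ a0 : Fin (m b.1), ∃ j', v j' = σ (copyE m α b a0) := by
    intro a0
    by_cases h0 : a0 ∈ P1
    · obtain ⟨i, hi⟩ := he1surj a0 h0
      refine ⟨Fin.castAdd q i, ?_⟩
      rw [hvl]
      simp only [hv1def, hi]
    · obtain ⟨i, hi⟩ := he2surj a0 (Finset.mem_compl.mpr h0)
      refine ⟨Fin.natAdd p i, ?_⟩
      rw [hvr]
      simp only [hv2def, hi]
  have hvu : ∀ j', ∃ a0, σ (copyE m α b a0) = v j' := by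
    intro j'
    rcases fin_add_key j' with ⟨i, rfl⟩ | ⟨i, rfl⟩
    · exact ⟨e1 i, by rw [hvl]⟩
    · exact ⟨e2 i, by rw [hvr]⟩
  have hiso := transport_iso Cc φ hd hC σ hσ (copyE_inj m α b) hvinj huv hvu
  rw [hCc, pull_copyE m α D b] at hiso
  have hBLclosed : ∀ b'' : Σ t, Fin (α t),
      (∀ a0, copyE m α b'' a0 ∈ rng (copyE m α b1)) ∨
      (∀ a0, copyE m α b'' a0 ∉ rng (copyE m α b1)) := by
    intro b''
    rcases eq_or_ne b'' b1 with rfl | hne'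
    · exact Or.inl (fun a0 => mem_rng.mpr ⟨a0, rfl⟩)
    · refine Or.inr (fun a0 h0 => ?_)
      obtain ⟨c, hc⟩ := mem_rng.mp h0
      exact hne' (copyE_sigma_inj m α hc).symm
  have hBLcclosed : ∀ b'' : Σ t, Fin (α t),
      (∀ a0, copyE m α b'' a0 ∈ (rng (copyE m α b1))ᶜ) ∨
      (∀ a0, copyE m α b'' a0 ∉ (rng (copyE m α b1))ᶜ) := by
    intro b''
    rcases hBLclosed b'' with h | h
    · exact Or.inr (fun a0 h0 => (Finset.mem_compl.mp h0) (h a0))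
    · exact Or.inl (fun a0 => Finset.mem_compl.mpr (h a0))
  have hv1BL : ∀ i, v1 i ∈ rng (copyE m α b1) := by
    intro i
    have hmem := he1P i
    rw [hP1, Finset.mem_filter] at hmem
    simp only [hv1def]
    rw [mem_rng, ← hmem.2]
    exact ⟨loc _, hblk _⟩
  have hv2BL : ∀ i, v2 i ∉ rng (copyE m α b1) := by
    intro i h0
    have hmem := he2P i
    rw [Finset.mem_compl, hP1, Finset.mem_filter] at hmem
    apply hmem
    refine ⟨mem_univ _, ?_⟩
    simp only [hv2def] at h0
    obtain ⟨c, hc⟩ := mem_rng.mp h0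
    have h3 := hblk (σ (copyE m α b (e2 i)))
    exact copyE_sigma_inj m α (h3.trans hc.symm)
  have hxoff : ∀ (w : Fin (p + q) → G) ℓ, ℓ ∉ rng v → extAlong v w ℓ = 1 :=
    fun w ℓ h => extAlong_apply_of_ne v w (fun s hs => h (mem_rng.mpr ⟨s, hs⟩))
  have hsplit : pullCode v Cc = gcSum (pullCode v1 Cc) (pullCode v2 Cc) := by
    ext w
    have hmemsum : w ∈ gcSum (pullCode v1 Cc) (pullCode v2 Cc) ↔
        ((fun i => w (Fin.castAdd q i)) ∈ pullCode v1 Cc ∧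
         (fun j => w (Fin.natAdd p j)) ∈ pullCode v2 Cc) := Iff.rfl
    rw [hmemsum, mem_pullCode, mem_pullCode, mem_pullCode]
    constructor
    · intro h
      have hkey1 : extAlong v1 (fun i => w (Fin.castAdd q i))
          = restr (rng (copyE m α b1)) (extAlong v w) := by
        funext ℓ
        by_cases hin : ∃ i, v1 i = ℓ
        · obtain ⟨i, rfl⟩ := hin
          rw [extAlong_apply hv1inj]
          have hr : restr (rng (copyE m α b1)) (extAlong v w) (v1 i)
              = extAlong v w (v1 i) := if_pos (hv1BL i)
          rw [hr, ← hvl i, extAlong_apply hvinj]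
        · rw [extAlong_apply_of_ne v1 _ (fun i hi => hin ⟨i, hi⟩)]
          by_cases hBL : ℓ ∈ rng (copyE m α b1)
          · have hr : restr (rng (copyE m α b1)) (extAlong v w) ℓ
                = extAlong v w ℓ := if_pos hBL
            rw [hr]
            by_cases hrv : ℓ ∈ rng v
            · rcases hrng_decomp ℓ hrv with ⟨i, hi⟩ | ⟨j, hj⟩
              · exact absurd ⟨i, hi⟩ hin
              · exact absurd (hj ▸ hBL) (hv2BL j)
            · exact (hxoff w ℓ hrv).symm
          · have hr : restr (rng (copyE m α b1)) (extAlong v w) ℓ = 1 := if_neg hBL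
            rw [hr]
      have hkey2 : extAlong v2 (fun j => w (Fin.natAdd p j))
          = restr ((rng (copyE m α b1))ᶜ) (extAlong v w) := by
        funext ℓ
        by_cases hin : ∃ j, v2 j = ℓ
        · obtain ⟨j, rfl⟩ := hin
          rw [extAlong_apply hv2inj]
          have hr : restr ((rng (copyE m α b1))ᶜ) (extAlong v w) (v2 j)
              = extAlong v w (v2 j) := if_pos (Finset.mem_compl.mpr (hv2BL j))
          rw [hr, ← hvr j, extAlong_apply hvinj]
        · rw [extAlong_apply_of_ne v2 _ (fun j hj => hin ⟨j, hj⟩)]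
          by_cases hBL : ℓ ∈ (rng (copyE m α b1))ᶜ
          · have hr : restr ((rng (copyE m α b1))ᶜ) (extAlong v w) ℓ
                = extAlong v w ℓ := if_pos hBL
            rw [hr]
            by_cases hrv : ℓ ∈ rng v
            · rcases hrng_decomp ℓ hrv with ⟨i, hi⟩ | ⟨j, hj⟩
              · exact absurd (Finset.mem_compl.mp (hi ▸ hBL) (hi ▸ hv1BL i)) id
              · exact absurd ⟨j, hj⟩ hin
            · exact (hxoff w ℓ hrv).symm
          · have hr : restr ((rng (copyE m α b1))ᶜ) (extAlong v w) ℓ = 1 := if_neg hBL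
            rw [hr]
      constructor
      · rw [hkey1]
        rw [hCc] at h ⊢
        exact restr_memC m α D h _ hBLclosed
      · rw [hkey2]
        rw [hCc] at h ⊢
        exact restr_memC m α D h _ hBLcclosed
    · rintro ⟨h1, h2⟩
      have hdecomp : extAlong v w
          = extAlong v1 (fun i => w (Fin.castAdd q i))
            * extAlong v2 (fun j => w (Fin.natAdd p j)) := by
        funext ℓ
        rw [Pi.mul_apply]
        by_cases hin1 : ∃ i, v1 i = ℓ
        · obtain ⟨i, rfl⟩ := hin1
          rw [extAlong_apply hv1inj,
            extAlong_apply_of_ne v2 _ (fun j hj => (hv12 i j) hj.symm), mul_one,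
            ← hvl i, extAlong_apply hvinj]
        · by_cases hin2 : ∃ j, v2 j = ℓ
          · obtain ⟨j, rfl⟩ := hin2
            rw [extAlong_apply hv2inj,
              extAlong_apply_of_ne v1 _ (fun i hi => (hv12 i j) hi), one_mul,
              ← hvr j, extAlong_apply hvinj]
          · rw [extAlong_apply_of_ne v1 _ (fun i hi => hin1 ⟨i, hi⟩),
              extAlong_apply_of_ne v2 _ (fun j hj => hin2 ⟨j, hj⟩), mul_one]
            refine hxoff w ℓ (fun hrv => ?_)
            rcases hrng_decomp ℓ hrv with hc | hc
            · exact hin1 hc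
            · exact hin2 hc
      rw [hdecomp]
      exact mul_mem h1 h2
  rw [hsplit] at hiso
  refine hind b.1 ⟨p, q, pullCode v1 Cc, pullCode v2 Cc, ?_, ?_, hiso⟩
  · refine Finset.card_pos.mpr ⟨a, ?_⟩
    rw [hP1, Finset.mem_filter]
    exact ⟨mem_univ _, hb1.symm⟩
  · refine Finset.card_pos.mpr ⟨a', ?_⟩
    rw [Finset.mem_compl, hP1, Finset.mem_filter]
    rintro ⟨-, h⟩
    exact hne h.symm

end GCaux
set_option linter.unusedSectionVars false
set_option maxHeartbeats 1000000
namespace GCaux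
open Finset Function

variable {G : Type*} [Group G] [DecidableEq G] {k : ℕ} (m α : Fin k → ℕ)
variable (D : ∀ j, Subgroup (Fin (m j) → G))

lemma himg_lemma (hm : ∀ j, 0 < m j)
    (hind : ∀ j, ¬ GCDecomposable (D j))
    (φ : MulAut (Fin (NN m α) → G))
    (hd : ∀ x y, hammingDist (φ x) (φ y) = hammingDist x y)
    (hC : ∀ x, φ x ∈ gcMultiSum (fun t => gcPow (D t) (α t)) ↔
      x ∈ gcMultiSum (fun t => gcPow (D t) (α t)))
    (σ : Equiv.Perm (Fin (NN m α))) (hσ : ∀ x j, φ x (σ j) = 1 ↔ x j = 1)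
    (blk : Fin (NN m α) → Σ t, Fin (α t)) (loc : ∀ ℓ, Fin (m (blk ℓ).1))
    (hblk : ∀ ℓ, copyE m α (blk ℓ) (loc ℓ) = ℓ)
    (b : Σ t, Fin (α t)) (a : Fin (m b.1)) :
    ∃ c : Fin (m (blk (σ (copyE m α b ⟨0, hm b.1⟩))).1),
      copyE m α (blk (σ (copyE m α b ⟨0, hm b.1⟩))) c = σ (copyE m α b a) := by
  have h1 := step1 m α D hind φ hd hC σ hσ blk loc hblk b a ⟨0, hm b.1⟩
  rw [← h1]
  exact ⟨loc _, hblk _⟩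

lemma top_invariant (hm : ∀ j, 0 < m j)
    (hind : ∀ j, ¬ GCDecomposable (D j))
    (hnoniso : ∀ s t, s ≠ t → ¬ GroupCodeIso (D s) (D t))
    (φ : MulAut (Fin (NN m α) → G))
    (hd : ∀ x y, hammingDist (φ x) (φ y) = hammingDist x y)
    (hC : ∀ x, φ x ∈ gcMultiSum (fun t => gcPow (D t) (α t)) ↔
      x ∈ gcMultiSum (fun t => gcPow (D t) (α t)))
    (σ : Equiv.Perm (Fin (NN m α))) (hσ : ∀ x j, φ x (σ j) = 1 ↔ x j = 1)
    (t : Fin k) (i : Fin (∑ _ : Fin (α t), m t)) :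
    σ (topE m α t i) ∈ rng (topE m α t) := by
  choose blk loc hblk using copyE_surj m α
  have hd' := inv_dist φ hd
  have hC' := inv_memC φ hC
  have hσ' := inv_perm_prop φ σ hσ
  set bimg : (Σ t, Fin (α t)) → Σ t, Fin (α t) :=
    fun b => blk (σ (copyE m α b ⟨0, hm b.1⟩)) with hbimg
  set bimg' : (Σ t, Fin (α t)) → Σ t, Fin (α t) :=
    fun b => blk (σ.symm (copyE m α b ⟨0, hm b.1⟩)) with hbimg'
  have himgφ : ∀ (b : Σ t, Fin (α t)) (a : Fin (m b.1)),
      ∃ c : Fin (m (bimg b).1), copyE m α (bimg b) c = σ (copyE m α b a) := by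
    intro b a
    exact himg_lemma m α D hm hind φ hd hC σ hσ blk loc hblk b a
  have himgψ : ∀ (b : Σ t, Fin (α t)) (a : Fin (m b.1)),
      ∃ c : Fin (m (bimg' b).1), copyE m α (bimg' b) c = σ.symm (copyE m α b a) := by
    intro b a
    exact himg_lemma m α D hm hind φ⁻¹ hd' hC' σ.symm hσ' blk loc hblk b a
  have hbb : ∀ b, bimg' (bimg b) = b := by
    intro b
    obtain ⟨c, hc⟩ := himgφ b ⟨0, hm b.1⟩
    obtain ⟨c', hc'⟩ := himgψ (bimg b) c
    rw [hc, Equiv.symm_apply_apply] at hc'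
    exact copyE_sigma_inj m α hc'
  have hbb' : ∀ b, bimg (bimg' b) = b := by
    intro b
    obtain ⟨c, hc⟩ := himgψ b ⟨0, hm b.1⟩
    obtain ⟨c', hc'⟩ := himgφ (bimg' b) c
    rw [hc, Equiv.apply_symm_apply] at hc'
    exact copyE_sigma_inj m α hc'
  have htype : ∀ b, (bimg b).1 = b.1 := by
    intro b
    by_contra hne
    have huv : ∀ a, ∃ c, copyE m α (bimg b) c = σ (copyE m α b a) := himgφ b
    have hvu : ∀ c, ∃ a, σ (copyE m α b a) = copyE m α (bimg b) c := by
      intro c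
      have h2 := himgψ (bimg b) c
      rw [hbb b] at h2
      obtain ⟨a, ha⟩ := h2
      refine ⟨a, ?_⟩
      rw [ha, Equiv.apply_symm_apply]
    have hiso := transport_iso (gcMultiSum (fun t => gcPow (D t) (α t))) φ hd hC σ hσ
      (copyE_inj m α b) (copyE_inj m α (bimg b)) huv hvu
    rw [pull_copyE m α D b, pull_copyE m α D (bimg b)] at hiso
    exact hnoniso b.1 (bimg b).1 (fun h => hne h.symm) hiso
  have htype' : ∀ b, (bimg' b).1 = b.1 := by
    intro b
    by_contra hne
    have huv : ∀ a, ∃ c, copyE m α (bimg' b) c = σ.symm (copyE m α b a) := himgψ b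
    have hvu : ∀ c, ∃ a, σ.symm (copyE m α b a) = copyE m α (bimg' b) c := by
      intro c
      have h2 := himgφ (bimg' b) c
      rw [hbb' b] at h2
      obtain ⟨a, ha⟩ := h2
      refine ⟨a, ?_⟩
      rw [ha, Equiv.symm_apply_apply]
    have hiso := transport_iso (gcMultiSum (fun t => gcPow (D t) (α t))) φ⁻¹ hd' hC'
      σ.symm hσ' (copyE_inj m α b) (copyE_inj m α (bimg' b)) huv hvu
    rw [pull_copyE m α D b, pull_copyE m α D (bimg' b)] at hiso
    exact hnoniso b.1 (bimg' b).1 (fun h => hne h.symm) hiso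
  obtain ⟨i0, a0, ha0⟩ := msEmb_sigma_surj (fun _ : Fin (α t) => m t) i
  have hiE : topE m α t i = copyE m α ⟨t, i0⟩ a0 := by
    rw [← ha0]; rfl
  rw [hiE]
  obtain ⟨c, hc⟩ := himgφ ⟨t, i0⟩ a0
  have hmem : σ (copyE m α ⟨t, i0⟩ a0) ∈ rng (topE m α (bimg ⟨t, i0⟩).1) := by
    rw [← hc]
    exact mem_rng.mpr ⟨msEmb (fun _ : Fin (α (bimg ⟨t, i0⟩).1) => m (bimg ⟨t, i0⟩).1)
      (bimg ⟨t, i0⟩).2 c, rfl⟩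
  rwa [htype ⟨t, i0⟩] at hmem

/-- the assembly map -/
noncomputable def XiF (g : ∀ t, ↥(AutGC (gcPow (D t) (α t)))) (x : Fin (NN m α) → G) :
    Fin (NN m α) → G :=
  fun ℓ => ((g (msIdx (fun t => ∑ _ : Fin (α t), m t) ℓ).1).val
    (x ∘ topE m α (msIdx (fun t => ∑ _ : Fin (α t), m t) ℓ).1))
    ((msIdx (fun t => ∑ _ : Fin (α t), m t) ℓ).2)

lemma msIdx_topE (t : Fin k) (i : Fin (∑ _ : Fin (α t), m t)) :
    msIdx (fun t => ∑ _ : Fin (α t), m t) (topE m α t i) = ⟨t, i⟩ := by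
  unfold topE
  exact msIdx_msEmb (fun t => ∑ _ : Fin (α t), m t) t i

lemma topE_msIdx (ℓ : Fin (NN m α)) :
    topE m α (msIdx (fun t => ∑ _ : Fin (α t), m t) ℓ).1
      (msIdx (fun t => ∑ _ : Fin (α t), m t) ℓ).2 = ℓ := by
  unfold topE
  exact msEmb_msIdx (fun t => ∑ _ : Fin (α t), m t) ℓ

lemma XiF_comp_topE (g : ∀ t, ↥(AutGC (gcPow (D t) (α t)))) (x : Fin (NN m α) → G)
    (t : Fin k) :
    (XiF m α D g x) ∘ topE m α t = (g t).val (x ∘ topE m α t) := by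
  funext i
  show ((g (msIdx (fun t => ∑ _ : Fin (α t), m t) (topE m α t i)).1).val
    (x ∘ topE m α (msIdx (fun t => ∑ _ : Fin (α t), m t) (topE m α t i)).1))
    ((msIdx (fun t => ∑ _ : Fin (α t), m t) (topE m α t i)).2) = _
  rw [msIdx_topE]

lemma XiF_mul (g : ∀ t, ↥(AutGC (gcPow (D t) (α t)))) (x y : Fin (NN m α) → G) :
    XiF m α D g (x * y) = XiF m α D g x * XiF m α D g y := by
  funext ℓ
  set s := msIdx (fun t => ∑ _ : Fin (α t), m t) ℓ with hs
  calc XiF m α D g (x * y) ℓ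
      = ((g s.1).val ((x ∘ topE m α s.1) * (y ∘ topE m α s.1))) s.2 := rfl
    _ = ((g s.1).val (x ∘ topE m α s.1) * (g s.1).val (y ∘ topE m α s.1)) s.2 := by
        rw [map_mul]
    _ = XiF m α D g x ℓ * XiF m α D g y ℓ := rfl

lemma XiF_comp (g h : ∀ t, ↥(AutGC (gcPow (D t) (α t)))) (x : Fin (NN m α) → G) :
    XiF m α D (g * h) x = XiF m α D g (XiF m α D h x) := by
  funext ℓ
  set s := msIdx (fun t => ∑ _ : Fin (α t), m t) ℓ with hs
  calc XiF m α D (g * h) x ℓ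
      = ((g s.1).val ((h s.1).val (x ∘ topE m α s.1))) s.2 := rfl
    _ = ((g s.1).val ((XiF m α D h x) ∘ topE m α s.1)) s.2 := by
        rw [XiF_comp_topE]
    _ = XiF m α D g (XiF m α D h x) ℓ := rfl

lemma XiF_one (x : Fin (NN m α) → G) : XiF m α D 1 x = x := by
  funext ℓ
  calc XiF m α D 1 x ℓ
      = x (topE m α (msIdx (fun t => ∑ _ : Fin (α t), m t) ℓ).1
          (msIdx (fun t => ∑ _ : Fin (α t), m t) ℓ).2) := rfl
    _ = x ℓ := by rw [topE_msIdx]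

noncomputable def Xi (g : ∀ t, ↥(AutGC (gcPow (D t) (α t)))) :
    MulAut (Fin (NN m α) → G) where
  toFun := XiF m α D g
  invFun := XiF m α D g⁻¹
  left_inv := fun x => by
    rw [← XiF_comp, inv_mul_cancel, XiF_one]
  right_inv := fun x => by
    rw [← XiF_comp, mul_inv_cancel, XiF_one]
  map_mul' := XiF_mul m α D g

lemma Xi_mem (g : ∀ t, ↥(AutGC (gcPow (D t) (α t)))) :
    Xi m α D g ∈ AutGC (gcMultiSum (fun t => gcPow (D t) (α t))) := by
  constructor
  · intro x y
    show hammingDist (XiF m α D g x) (XiF m α D g y) = hammingDist x y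
    rw [hammingDist_blocks (fun t => ∑ _ : Fin (α t), m t) (XiF m α D g x) (XiF m α D g y),
      hammingDist_blocks (fun t => ∑ _ : Fin (α t), m t) x y]
    refine Finset.sum_congr rfl (fun t _ => ?_)
    have e1 : (XiF m α D g x) ∘ msEmb (fun t => ∑ _ : Fin (α t), m t) t
        = (g t).val (x ∘ topE m α t) := XiF_comp_topE m α D g x t
    have e2 : (XiF m α D g y) ∘ msEmb (fun t => ∑ _ : Fin (α t), m t) t
        = (g t).val (y ∘ topE m α t) := XiF_comp_topE m α D g y t
    rw [e1, e2]
    exact (g t).2.1 _ _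
  · intro x
    show XiF m α D g x ∈ _ ↔ _
    rw [memC_top_iff, memC_top_iff]
    refine forall_congr' (fun t => ?_)
    rw [show (XiF m α D g x) ∘ topE m α t = (g t).val (x ∘ topE m α t) from
      XiF_comp_topE m α D g x t]
    exact (g t).2.2 _

end GCaux
set_option linter.unusedSectionVars false
set_option maxHeartbeats 1000000
namespace GCaux
open Finset Function

variable {G : Type*} [Group G] [DecidableEq G] {k : ℕ} (m α : Fin k → ℕ)

noncomputable def compAut (φ : MulAut (Fin (NN m α) → G)) (σ : Equiv.Perm (Fin (NN m α)))
    (hσ : ∀ x j, φ x (σ j) = 1 ↔ x j = 1) (t : Fin k)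
    (huv : ∀ a, ∃ j', topE m α t j' = σ (topE m α t a))
    (huv' : ∀ a, ∃ j', topE m α t j' = σ.symm (topE m α t a)) :
    MulAut (Fin (∑ _ : Fin (α t), m t) → G) where
  toFun := transF φ (topE m α t) (topE m α t)
  invFun := transF φ⁻¹ (topE m α t) (topE m α t)
  left_inv := transF_left_inv φ σ hσ (topE_inj m α t) (topE_inj m α t) huv
  right_inv := fun w => by
    have h2 := transF_left_inv φ⁻¹ σ.symm (inv_perm_prop φ σ hσ)
      (topE_inj m α t) (topE_inj m α t) huv' w
    rwa [inv_inv] at h2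
  map_mul' := transF_mul φ _ _

variable (D : ∀ j, Subgroup (Fin (m j) → G))

lemma compAut_mem (φ : MulAut (Fin (NN m α) → G))
    (hd : ∀ x y, hammingDist (φ x) (φ y) = hammingDist x y)
    (hC : ∀ x, φ x ∈ gcMultiSum (fun t => gcPow (D t) (α t)) ↔
      x ∈ gcMultiSum (fun t => gcPow (D t) (α t)))
    (σ : Equiv.Perm (Fin (NN m α))) (hσ : ∀ x j, φ x (σ j) = 1 ↔ x j = 1) (t : Fin k)
    (huv : ∀ a, ∃ j', topE m α t j' = σ (topE m α t a))
    (huv' : ∀ a, ∃ j', topE m α t j' = σ.symm (topE m α t a)) :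
    compAut m α φ σ hσ t huv huv' ∈ AutGC (gcPow (D t) (α t)) := by
  have hσ' := inv_perm_prop φ σ hσ
  have hd' := inv_dist φ hd
  have hC' := inv_memC φ hC
  refine ⟨fun y z => ?_, fun y => ?_⟩
  · refine le_antisymm (transF_dist_le φ hd (topE_inj m α t) (topE_inj m α t) y z) ?_
    have h2 := transF_dist_le φ⁻¹ hd' (topE_inj m α t) (topE_inj m α t)
      (transF φ (topE m α t) (topE m α t) y) (transF φ (topE m α t) (topE m α t) z)
    rwa [transF_left_inv φ σ hσ (topE_inj m α t) (topE_inj m α t) huv,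
      transF_left_inv φ σ hσ (topE_inj m α t) (topE_inj m α t) huv] at h2
  · show transF φ (topE m α t) (topE m α t) y ∈ _ ↔ _
    rw [← pull_topE m α D t]
    constructor
    · intro h2
      have h3 := transF_mem φ⁻¹ hC' σ.symm hσ' (topE_inj m α t) (topE_inj m α t) huv' h2
      rwa [transF_left_inv φ σ hσ (topE_inj m α t) (topE_inj m α t) huv] at h3
    · intro h2
      exact transF_mem φ hC σ hσ (topE_inj m α t) (topE_inj m α t) huv h2

lemma phi_restr (φ : MulAut (Fin (NN m α) → G)) (σ : Equiv.Perm (Fin (NN m α)))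
    (hσ : ∀ x j, φ x (σ j) = 1 ↔ x j = 1) (t : Fin k)
    (hvu : ∀ j', ∃ a, σ (topE m α t a) = topE m α t j')
    (x : Fin (NN m α) → G) (i : Fin (∑ _ : Fin (α t), m t)) :
    φ (extAlong (topE m α t) (x ∘ topE m α t)) (topE m α t i) = φ x (topE m α t i) := by
  have hdecomp : x = extAlong (topE m α t) (x ∘ topE m α t)
      * restr (rng (topE m α t))ᶜ x := by
    funext ℓ
    rw [Pi.mul_apply]
    by_cases h : ∃ a, topE m α t a = ℓ
    · obtain ⟨a, rfl⟩ := h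
      rw [extAlong_apply (topE_inj m α t)]
      have hr : restr (rng (topE m α t))ᶜ x (topE m α t a) = 1 :=
        if_neg (fun hq => (Finset.mem_compl.mp hq) (mem_rng.mpr ⟨a, rfl⟩))
      rw [hr, mul_one]
      rfl
    · rw [extAlong_apply_of_ne _ _ (fun a ha => h ⟨a, ha⟩), one_mul]
      exact (if_pos (Finset.mem_compl.mpr (fun hq => h (mem_rng.mp hq)))).symm
  conv_rhs => rw [hdecomp]
  rw [map_mul, Pi.mul_apply]
  have hone : φ (restr (rng (topE m α t))ᶜ x) (topE m α t i) = 1 := by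
    obtain ⟨a, ha⟩ := hvu i
    rw [← ha, hσ]
    exact if_neg (fun hq => (Finset.mem_compl.mp hq) (mem_rng.mpr ⟨a, rfl⟩))
  rw [hone, mul_one]

end GCaux
set_option linter.unusedSectionVars false
set_option maxHeartbeats 1000000

open GCaux

/-- If `D_1, …, D_k` are pairwise non-isomorphic indecomposable group
codes and `α_j ≥ 1`, then `Aut_GC(D_1^{α_1} ⊕ ⋯ ⊕ D_k^{α_k})` is isomorphic to the direct
product of the groups `Aut_GC(D_j^{α_j})`. -/
theorem autGC_sum_powers_eq_prod {G : Type*} [Group G] [Fintype G] [DecidableEq G]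
    {k : ℕ} (m α : Fin k → ℕ) (hm : ∀ j, 0 < m j) (hα : ∀ j, 0 < α j)
    (D : ∀ j, Subgroup (Fin (m j) → G))
    (hind : ∀ j, ¬ GCDecomposable (D j))
    (hnoniso : ∀ s t, s ≠ t → ¬ GroupCodeIso (D s) (D t)) :
    Nonempty (↥(AutGC (gcMultiSum (fun j => gcPow (D j) (α j)))) ≃*
      ∀ j, ↥(AutGC (gcPow (D j) (α j)))) := by
  classical
  by_cases hG : Nontrivial G
  · -- main case
    haveI := hG
    have hXmem : ∀ g, Xi m α D g ∈ AutGC (gcMultiSum (fun t => gcPow (D t) (α t))) :=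
      fun g => Xi_mem m α D g
    set Θ : (∀ j, ↥(AutGC (gcPow (D j) (α j)))) →*
        ↥(AutGC (gcMultiSum (fun j => gcPow (D j) (α j)))) :=
      MonoidHom.mk' (fun g => ⟨Xi m α D g, hXmem g⟩)
        (fun g h => Subtype.ext (MulEquiv.ext (fun x => by
          show XiF m α D (g * h) x = (Xi m α D g * Xi m α D h) x
          rw [MulAut.mul_apply]
          exact XiF_comp m α D g h x))) with hΘ
    have hinj : Function.Injective Θ := by
      intro g h hgh
      have hXi : Xi m α D g = Xi m α D h := congrArg Subtype.val hgh
      funext t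
      apply Subtype.ext
      apply MulEquiv.ext
      intro y
      have e1 := XiF_comp_topE m α D g (extAlong (topE m α t) y) t
      have e2 := XiF_comp_topE m α D h (extAlong (topE m α t) y) t
      rw [extAlong_comp (topE_inj m α t)] at e1 e2
      have hx := DFunLike.congr_fun hXi (extAlong (topE m α t) y)
      have hx' : XiF m α D g (extAlong (topE m α t) y)
          = XiF m α D h (extAlong (topE m α t) y) := hx
      show (g t).val y = (h t).val y
      rw [← e1, ← e2, hx']
    have hsurj : Function.Surjective Θ := by
      rintro ⟨φ, hφ⟩
      have hφ' : (∀ x y, hammingDist (φ x) (φ y) = hammingDist x y) ∧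
          (∀ x, φ x ∈ gcMultiSum (fun t => gcPow (D t) (α t)) ↔
            x ∈ gcMultiSum (fun t => gcPow (D t) (α t))) := hφ
      have hdst := hφ'.1
      have hmemC := hφ'.2
      obtain ⟨σ, hσ⟩ := monomial φ hdst
      have hσ' := inv_perm_prop φ σ hσ
      have hd' := inv_dist φ hdst
      have hC' := inv_memC φ hmemC
      have hTI : ∀ t i, σ (topE m α t i) ∈ rng (topE m α t) :=
        top_invariant m α D hm hind hnoniso φ hdst hmemC σ hσ
      have hTI' : ∀ t i, σ.symm (topE m α t i) ∈ rng (topE m α t) :=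
        top_invariant m α D hm hind hnoniso φ⁻¹ hd' hC' σ.symm hσ'
      have huvt : ∀ t a, ∃ j', topE m α t j' = σ (topE m α t a) :=
        fun t a => mem_rng.mp (hTI t a)
      have huvt' : ∀ t a, ∃ j', topE m α t j' = σ.symm (topE m α t a) :=
        fun t a => mem_rng.mp (hTI' t a)
      have hvut : ∀ t j', ∃ a, σ (topE m α t a) = topE m α t j' := by
        intro t j'
        obtain ⟨a, ha⟩ := huvt' t j'
        exact ⟨a, by rw [ha, Equiv.apply_symm_apply]⟩
      refine ⟨fun t => ⟨compAut m α φ σ hσ t (huvt t) (huvt' t),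
        compAut_mem m α D φ hdst hmemC σ hσ t (huvt t) (huvt' t)⟩, ?_⟩
      apply Subtype.ext
      apply MulEquiv.ext
      intro x
      funext ℓ
      show XiF m α D (fun t => ⟨compAut m α φ σ hσ t (huvt t) (huvt' t),
        compAut_mem m α D φ hdst hmemC σ hσ t (huvt t) (huvt' t)⟩) x ℓ = φ x ℓ
      have hs := topE_msIdx m α ℓ
      calc XiF m α D (fun t => ⟨compAut m α φ σ hσ t (huvt t) (huvt' t),
            compAut_mem m α D φ hdst hmemC σ hσ t (huvt t) (huvt' t)⟩) x ℓ
          = φ (extAlong (topE m α (msIdx (fun t => ∑ _ : Fin (α t), m t) ℓ).1)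
              (x ∘ topE m α (msIdx (fun t => ∑ _ : Fin (α t), m t) ℓ).1))
              (topE m α (msIdx (fun t => ∑ _ : Fin (α t), m t) ℓ).1
                (msIdx (fun t => ∑ _ : Fin (α t), m t) ℓ).2) := rfl
        _ = φ x (topE m α (msIdx (fun t => ∑ _ : Fin (α t), m t) ℓ).1
              (msIdx (fun t => ∑ _ : Fin (α t), m t) ℓ).2) :=
            phi_restr m α φ σ hσ _ (hvut _) x _
        _ = φ x ℓ := by rw [hs]
    exact ⟨(MulEquiv.ofBijective Θ ⟨hinj, hsurj⟩).symm⟩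
  · -- degenerate case : G is trivial
    have hsub : Subsingleton G := not_nontrivial_iff_subsingleton.mp hG
    rcases Nat.eq_zero_or_pos k with hk | hk
    · subst hk
      haveI : Subsingleton (Fin (GCaux.NN m α) → G) := inferInstance
      haveI : Subsingleton (MulAut (Fin (GCaux.NN m α) → G)) :=
        ⟨fun a b => MulEquiv.ext (fun x => Subsingleton.elim _ _)⟩
      haveI h1 : Unique ↥(AutGC (gcMultiSum (fun j => gcPow (D j) (α j)))) :=
        { default := 1, uniq := fun a => Subtype.ext (Subsingleton.elim _ _) }
      haveI h2 : Unique (∀ j : Fin 0, ↥(AutGC (gcPow (D j) (α j)))) := inferInstance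
      exact ⟨MulEquiv.ofUnique⟩
    · exfalso
      apply hind ⟨0, hk⟩
      haveI : ∀ n : ℕ, Subsingleton (Fin n → G) := fun n => inferInstance
      refine ⟨1, 1, ⊤, ⊤, one_pos, one_pos,
        fun _ => (1 : Fin (1 + 1) → G), fun _ => (1 : Fin (m ⟨0, hk⟩) → G),
        ⟨fun x y => (mul_one (1 : Fin (1 + 1) → G)).symm,
          fun x _ => Subgroup.one_mem _,
          fun x y => by rw [hammingDist_self]; exact Nat.zero_le _⟩,
        ⟨fun x y => (mul_one (1 : Fin (m ⟨0, hk⟩) → G)).symm,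
          fun x _ => Subgroup.one_mem _,
          fun x y => by rw [hammingDist_self]; exact Nat.zero_le _⟩,
        fun x => Subsingleton.elim _ _,
        fun y => Subsingleton.elim _ _⟩
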